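/- arXiv:2107.05200 — 7 statements merged into one kernel-verified Lean document; each statement's English description precedes it below -/
import Mathlib

section
/- Let d ≥ 1 and let X ∈ ℝ^{d×d} be invertible. Then the function f_D is (Fréchet) differentiable at X and its gradient with respect to the Frobenius inner product is ∇f_D(X) = X − X^{−⊤}X^{−1}X^{−⊤}; that is, the derivative of f_D at X is the linear map H ↦ trace((X − X^{−⊤}X^{−1}X^{−⊤})ᵀ H). -/
/-! With `⟪A, B⟫ = trace (Aᵀ * B)`, `f_D(Y) = ½ (⟪Y, Y⟫ + ⟪Y⁻¹, Y⁻¹⟫)`. The derivative of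
`y ↦ ⟪f y, f y⟫` is `2 ⟪f x, f' ·⟫`, inversion has derivative `H ↦ -X⁻¹ H X⁻¹`, and cyclicity of
the trace moves the two factors `X⁻¹` across the pairing: `⟪X⁻¹, X⁻¹ H X⁻¹⟫ = ⟪X⁻ᵀ X⁻¹ X⁻ᵀ, H⟫`. -/

open Matrix

attribute [local instance] Matrix.frobeniusNormedAddCommGroup Matrix.frobeniusNormedSpace

/-- The defining function of the symmetric Dirichlet energy:
`f_D(X) = (1/2)(‖X‖² + ‖X⁻¹‖²)`, where `‖·‖` is the Frobenius norm,
so `‖X‖² = trace(Xᵀ X)`. -/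
noncomputable def fD {d : ℕ} (X : Matrix (Fin d) (Fin d) ℝ) : ℝ :=
  (1 / 2) * (Matrix.trace (Xᵀ * X) + Matrix.trace ((X⁻¹)ᵀ * X⁻¹))

attribute [local instance] Matrix.frobeniusNormedRing Matrix.frobeniusNormedAlgebra

namespace Matrix

section FrobeniusInner

variable {m n p q : Type*} [Fintype m] [Fintype n] [Fintype p] [Fintype q]

noncomputable def frobeniusInner : Matrix m n ℝ →L[ℝ] Matrix m n ℝ →L[ℝ] ℝ :=
  LinearMap.toContinuousBilinearMap <|
    LinearMap.mk₂ ℝ (fun A B => trace (Aᵀ * B))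
      (fun A A' B => by rw [transpose_add, Matrix.add_mul, trace_add])
      (fun c A B => by rw [transpose_smul, smul_mul, trace_smul])
      (fun A B B' => by rw [Matrix.mul_add, trace_add])
      (fun c A B => by rw [Matrix.mul_smul, trace_smul])

theorem frobeniusInner_apply (A B : Matrix m n ℝ) : frobeniusInner A B = trace (Aᵀ * B) :=
  rfl

theorem frobeniusInner_comm (A B : Matrix m n ℝ) : frobeniusInner A B = frobeniusInner B A := by
  rw [frobeniusInner_apply, frobeniusInner_apply, ← trace_transpose, transpose_mul,
    transpose_transpose]

theorem frobeniusInner_mul_mul (A : Matrix m n ℝ) (B : Matrix m p ℝ) (H : Matrix p q ℝ)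
    (C : Matrix q n ℝ) : frobeniusInner A (B * H * C) = frobeniusInner (Bᵀ * A * Cᵀ) H := by
  simp only [frobeniusInner_apply, transpose_mul, transpose_transpose, ← Matrix.mul_assoc]
  rw [trace_mul_comm _ C, ← Matrix.mul_assoc, ← Matrix.mul_assoc]

theorem _root_.HasFDerivAt.frobeniusInner_self {E : Type*} [NormedAddCommGroup E]
    [NormedSpace ℝ E] {f : E → Matrix m n ℝ} {f' : E →L[ℝ] Matrix m n ℝ} {x : E}
    (hf : HasFDerivAt f f' x) :
    HasFDerivAt (fun y => frobeniusInner (f y) (f y)) (2 • (frobeniusInner (f x)).comp f') x := by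
  refine (frobeniusInner.hasFDerivAt_of_bilinear hf hf).congr_fderiv ?_
  refine ContinuousLinearMap.ext fun v => ?_
  change frobeniusInner (f x) (f' v) + frobeniusInner (f' v) (f x) =
    2 • frobeniusInner (f x) (f' v)
  rw [frobeniusInner_comm (f' v), two_nsmul]

end FrobeniusInner

theorem hasFDerivAt_inv {𝕜 n : Type*} [RCLike 𝕜] [Fintype n] [DecidableEq n]
    {X : Matrix n n 𝕜} (hX : IsUnit X.det) :
    HasFDerivAt (fun Y : Matrix n n 𝕜 => Y⁻¹)
      (-ContinuousLinearMap.mulLeftRight 𝕜 (Matrix n n 𝕜) X⁻¹ X⁻¹) X := by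
  obtain ⟨u, rfl⟩ := (isUnit_iff_isUnit_det X).mpr hX
  have hinv : ∀ Y : Matrix n n 𝕜, Y⁻¹ = Ring.inverse Y := nonsing_inv_eq_ringInverse
  simpa only [funext hinv, Ring.inverse_unit] using hasFDerivAt_ringInverse (𝕜 := 𝕜) u

end Matrix

theorem fD_hasFDerivAt_general (d : ℕ)
    (X : Matrix (Fin d) (Fin d) ℝ) (hX : IsUnit X.det) :
    ∃ L : Matrix (Fin d) (Fin d) ℝ →L[ℝ] ℝ,
      HasFDerivAt fD L X ∧
      ∀ H : Matrix (Fin d) (Fin d) ℝ,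
        L H = Matrix.trace ((X - (X⁻¹)ᵀ * X⁻¹ * (X⁻¹)ᵀ)ᵀ * H) := by
  refine ⟨frobeniusInner (X - (X⁻¹)ᵀ * X⁻¹ * (X⁻¹)ᵀ), ?_, fun H => rfl⟩
  have h := (((hasFDerivAt_id X).frobeniusInner_self).add
    (hasFDerivAt_inv hX).frobeniusInner_self).const_mul (1 / 2)
  refine h.congr_fderiv ?_
  ext H
  -- `simp` cannot apply the composite: it mixes the Frobenius and the algebra module structures.
  change (1 / 2 : ℝ) * (2 • frobeniusInner X H + 2 • frobeniusInner X⁻¹ (-(X⁻¹ * H * X⁻¹))) =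
    frobeniusInner (X - (X⁻¹)ᵀ * X⁻¹ * (X⁻¹)ᵀ) H
  rw [map_neg, frobeniusInner_mul_mul, map_sub, _root_.sub_apply]
  simp only [nsmul_eq_mul, Nat.cast_ofNat]
  ring

/-- for invertible `X`, `f_D` is Fréchet differentiable at `X` and its
derivative is the linear map `H ↦ trace((X − X⁻ᵀ X⁻¹ X⁻ᵀ)ᵀ H)`, i.e. its Frobenius
gradient is `X − X⁻ᵀ X⁻¹ X⁻ᵀ`. -/
theorem fD_hasFDerivAt (d : ℕ) (hd : 1 ≤ d)
    (X : Matrix (Fin d) (Fin d) ℝ) (hX : IsUnit X.det) :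
    ∃ L : Matrix (Fin d) (Fin d) ℝ →L[ℝ] ℝ,
      HasFDerivAt fD L X ∧
      ∀ H : Matrix (Fin d) (Fin d) ℝ,
        L H = Matrix.trace ((X - (X⁻¹)ᵀ * X⁻¹ * (X⁻¹)ᵀ)ᵀ * H) :=
  fD_hasFDerivAt_general d X hX
end

section
/- Let d ≥ 1. The function f_D(X) = (1/2)(‖X‖² + ‖X⁻¹‖²) is convex on the convex set of symmetric positive definite d×d real matrices. -/
/-! Each summand of `f_D` lies above its tangent hyperplanes on positive definite matrices. For
`tr (Xᵀ X)` the gap at `Y` is `‖Y - X‖²`. For `tr (X⁻²)`, writing `P = X⁻¹` and `E = Y⁻¹ - X⁻¹`,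
the gap is `tr (E²) + 2 tr (P E Y E)`, and `tr (P E Y E) ≥ 0` because the trace of a product of two
positive semidefinite matrices is nonnegative (conjugate by `√P`). -/

open Matrix

open scoped MatrixOrder ComplexOrder

theorem ConvexOn.of_forall_le_add_linearMap {𝕜 E β : Type*} [Semiring 𝕜] [PartialOrder 𝕜]
    [IsOrderedRing 𝕜] [AddCommGroup E] [Module 𝕜 E] [AddCommGroup β] [PartialOrder β]
    [IsOrderedAddMonoid β] [Module 𝕜 β] [PosSMulMono 𝕜 β] {s : Set E} {f : E → β}
    (hs : Convex 𝕜 s) (h : ∀ x ∈ s, ∃ φ : E →ₗ[𝕜] β, ∀ y ∈ s, f x + φ (y - x) ≤ f y) :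
    ConvexOn 𝕜 s f := by
  refine ⟨hs, fun x hx y hy a b ha hb hab => ?_⟩
  obtain ⟨φ, hφ⟩ := h _ (hs hx hy ha hb hab)
  set z := a • x + b • y
  have hsum : a • (x - z) + b • (y - z) = 0 := by
    rw [smul_sub, smul_sub, sub_add_sub_comm, ← add_smul, hab, one_smul, sub_self]
  calc f z = a • (f z + φ (x - z)) + b • (f z + φ (y - z)) := by
        rw [smul_add, smul_add, add_add_add_comm, ← add_smul, hab, one_smul, ← map_smul,
          ← map_smul, ← map_add, hsum, map_zero, add_zero]
    _ ≤ a • f x + b • f y :=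
        add_le_add (smul_le_smul_of_nonneg_left (hφ x hx) ha)
          (smul_le_smul_of_nonneg_left (hφ y hy) hb)

namespace Matrix

variable {n 𝕜 : Type*} [RCLike 𝕜]

theorem convex_setOf_posDef : Convex ℝ {A : Matrix n n 𝕜 | A.PosDef} :=
  convex_iff_forall_pos.mpr fun _ hA _ hB _ _ ha hb _ => (hA.smul ha).add (hB.smul hb)

variable [Fintype n]

theorem PosSemidef.trace_mul_nonneg {A B : Matrix n n 𝕜} (hA : A.PosSemidef)
    (hB : B.PosSemidef) : 0 ≤ (A * B).trace := by
  classical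
  have hS : (CFC.sqrt A)ᴴ = CFC.sqrt A := (CFC.sqrt_nonneg A).posSemidef.isHermitian.eq
  have hAB : (A * B).trace = ((CFC.sqrt A)ᴴ * B * CFC.sqrt A).trace := by
    rw [hS, trace_mul_cycle, CFC.sqrt_mul_sqrt_self A hA.nonneg]
  rw [hAB]
  exact (hB.conjTranspose_mul_mul_same _).trace_nonneg

theorem PosDef.trace_inv_mul_inv_sub_le [DecidableEq n] {X Y : Matrix n n 𝕜} (hX : X.PosDef)
    (hY : Y.PosDef) :
    trace (X⁻¹ * X⁻¹) - 2 * trace (X⁻¹ * X⁻¹ * X⁻¹ * (Y - X)) ≤ trace (Y⁻¹ * Y⁻¹) := by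
  set P := X⁻¹
  set Q := Y⁻¹
  set E := Q - P
  have hPX : P * X = 1 := nonsing_inv_mul X (isUnit_iff_ne_zero.mpr hX.det_pos.ne')
  have hQY : Q * Y = 1 := nonsing_inv_mul Y (isUnit_iff_ne_zero.mpr hY.det_pos.ne')
  have hYQ : Y * Q = 1 := mul_nonsing_inv Y (isUnit_iff_ne_zero.mpr hY.det_pos.ne')
  have hE : Eᴴ = E := (hY.inv.isHermitian.sub hX.inv.isHermitian).eq
  have hEYE : E * Y * E = Q - P - P + P * Y * P := by
    simp only [E, sub_mul, mul_sub, hQY, one_mul, mul_assoc P Y Q, hYQ, mul_one]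
    abel
  have hgap : trace (Q * Q) - (trace (P * P) - 2 * trace (P * P * P * (Y - X))) =
      trace (Eᴴ * E) + 2 * trace (P * (Eᴴ * Y * E)) := by
    have hPPPX : trace (P * P * P * X) = trace (P * P) := by rw [mul_assoc, hPX, mul_one]
    have hPPYP : trace (P * (P * Y * P)) = trace (P * P * P * Y) := by
      rw [← mul_assoc, trace_mul_comm]
      simp only [mul_assoc]
    rw [hE, hEYE]
    simp only [E, mul_sub, sub_mul, mul_add, trace_sub, trace_add, hPPPX, hPPYP,
      trace_mul_comm Q P]
    ring
  rw [← sub_nonneg, hgap]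
  exact add_nonneg (posSemidef_conjTranspose_mul_self E).trace_nonneg <| mul_nonneg zero_le_two <|
    hX.inv.posSemidef.trace_mul_nonneg (hY.posSemidef.conjTranspose_mul_mul_same E)

theorem convexOn_trace_transpose_mul_self :
    ConvexOn ℝ Set.univ fun X : Matrix n n ℝ => trace (Xᵀ * X) := by
  refine .of_forall_le_add_linearMap convex_univ fun X _ =>
    ⟨(2 : ℝ) • (traceLinearMap n ℝ ℝ).comp (LinearMap.mulLeft ℝ Xᵀ), fun Y _ => ?_⟩
  have hYX : trace (Yᵀ * X) = trace (Xᵀ * Y) := by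
    rw [← trace_transpose, transpose_mul, transpose_transpose]
  have hgap : trace ((Y - X)ᴴ * (Y - X)) =
      trace (Yᵀ * Y) - (trace (Xᵀ * X) + 2 * trace (Xᵀ * (Y - X))) := by
    simp only [conjTranspose_eq_transpose_of_trivial, transpose_sub, sub_mul, mul_sub, trace_sub,
      hYX]
    ring
  have hnonneg := (posSemidef_conjTranspose_mul_self (Y - X)).trace_nonneg
  simp only [LinearMap.smul_apply, LinearMap.comp_apply, LinearMap.mulLeft_apply,
    traceLinearMap_apply, smul_eq_mul]
  linarith

theorem convexOn_trace_inv_transpose_mul_inv [DecidableEq n] :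
    ConvexOn ℝ {X : Matrix n n ℝ | X.PosDef} fun X => trace ((X⁻¹)ᵀ * X⁻¹) := by
  refine .of_forall_le_add_linearMap convex_setOf_posDef fun X hX =>
    ⟨(-2 : ℝ) • (traceLinearMap n ℝ ℝ).comp (LinearMap.mulLeft ℝ (X⁻¹ * X⁻¹ * X⁻¹)),
      fun Y hY => ?_⟩
  have hsymm {Z : Matrix n n ℝ} (hZ : Z.PosDef) : (Z⁻¹)ᵀ = Z⁻¹ := by
    rw [← conjTranspose_eq_transpose_of_trivial, hZ.inv.isHermitian.eq]
  have htangent := PosDef.trace_inv_mul_inv_sub_le hX hY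
  simp only [hsymm hX, hsymm hY, LinearMap.smul_apply, LinearMap.comp_apply,
    LinearMap.mulLeft_apply, traceLinearMap_apply, smul_eq_mul]
  linarith

end Matrix

theorem fD_convexOn_posDef_general (d : ℕ) :
    ConvexOn ℝ {X : Matrix (Fin d) (Fin d) ℝ | X.PosDef} fD :=
  ((convexOn_trace_transpose_mul_self.subset (Set.subset_univ _) convex_setOf_posDef).add
    convexOn_trace_inv_transpose_mul_inv).smul (by norm_num : (0 : ℝ) ≤ 1 / 2)

/-- `f_D` is convex on the convex set of symmetric positive definite
`d × d` real matrices. -/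
theorem fD_convexOn_posDef (d : ℕ) (hd : 1 ≤ d) :
    ConvexOn ℝ {X : Matrix (Fin d) (Fin d) ℝ | X.PosDef} fD :=
  fD_convexOn_posDef_general d
end

section
/- Let B ≥ 0 and let P ∈ ℝ^{d×d} be symmetric positive definite with ‖P − P⁻¹‖ ≤ B (Frobenius norm). Then the smallest eigenvalue of P satisfies λ_min(P) ≥ C^L, where C^L := −B/2 + √(4 + B²)/2, i.e., C^L is the positive root of x² + Bx − 1 = 0. -/
open Matrix

/-- Frobenius norm `‖X‖ = (trace(Xᵀ X))^{1/2}`. -/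
noncomputable def frobNorm {d : ℕ} (X : Matrix (Fin d) (Fin d) ℝ) : ℝ :=
  Real.sqrt (Matrix.trace (Xᵀ * X))

lemma trace_key (d : ℕ) (P : Matrix (Fin d) (Fin d) ℝ) (hP : P.PosDef) :
    Matrix.trace ((P - P⁻¹)ᵀ * (P - P⁻¹)) =
      ∑ i, (hP.1.eigenvalues i - (hP.1.eigenvalues i)⁻¹) ^ 2 := by
  classical
  have hH := hP.1
  set U : Matrix (Fin d) (Fin d) ℝ := (hH.eigenvectorUnitary : Matrix (Fin d) (Fin d) ℝ) with hU
  have hUm : (U : Matrix (Fin d) (Fin d) ℝ) ∈ Matrix.unitaryGroup (Fin d) ℝ :=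
    hH.eigenvectorUnitary.2
  have hUsU : star U * U = 1 := (Matrix.mem_unitaryGroup_iff').mp hUm
  have hUUs : U * star U = 1 := (Matrix.mem_unitaryGroup_iff).mp hUm
  set lam := hH.eigenvalues with hlam
  have hspec : P = U * diagonal lam * star U := by
    have := hH.spectral_theorem
    simpa using this
  have hlpos : ∀ i, 0 < lam i := fun i => hP.eigenvalues_pos i
  have hinv : P⁻¹ = U * diagonal (fun i => (lam i)⁻¹) * star U := by
    apply Matrix.inv_eq_right_inv
    rw [hspec]
    have step : U * diagonal lam * star U * (U * diagonal (fun i => (lam i)⁻¹) * star U)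
        = U * (diagonal lam * ((star U * U) * (diagonal (fun i => (lam i)⁻¹) * star U))) := by
      simp only [Matrix.mul_assoc]
    rw [step, hUsU, Matrix.one_mul, ← Matrix.mul_assoc (diagonal lam), diagonal_mul_diagonal]
    have : (fun i => lam i * (lam i)⁻¹) = fun _ => (1:ℝ) := by
      funext i; exact mul_inv_cancel₀ (hlpos i).ne'
    rw [this, diagonal_one, Matrix.one_mul, hUUs]
  set c : Fin d → ℝ := fun i => lam i - (lam i)⁻¹ with hc
  have hM : P - P⁻¹ = U * diagonal c * star U := by
    rw [hinv]
    nth_rewrite 1 [hspec]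
    rw [← Matrix.sub_mul, ← Matrix.mul_sub, ← diagonal_sub]
  have hMt : (P - P⁻¹)ᵀ = P - P⁻¹ := by
    have hPt : Pᵀ = P := by
      have := hH.eq
      ext i j
      have := congrFun (congrFun this i) j
      simpa using this
    rw [transpose_sub, transpose_nonsing_inv, hPt]
  rw [hMt, hM]
  have step : U * diagonal c * star U * (U * diagonal c * star U)
      = U * (diagonal c * ((star U * U) * (diagonal c * star U))) := by
    simp only [Matrix.mul_assoc]
  rw [step, hUsU, Matrix.one_mul, ← Matrix.mul_assoc (diagonal c), diagonal_mul_diagonal]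
  rw [← Matrix.mul_assoc, Matrix.trace_mul_cycle, hUsU, Matrix.one_mul, trace_diagonal]
  exact Finset.sum_congr rfl fun i _ => (sq (c i)).symm

/-- if `P` is symmetric positive definite with `‖P − P⁻¹‖ ≤ B`
(Frobenius norm), then every eigenvalue of `P` (in particular the smallest one)
is at least `C^L = −B/2 + √(4 + B²)/2`, the positive root of `x² + Bx − 1 = 0`. -/
theorem eigenvalue_lower_bound_symmetric_gradient (d : ℕ) (B : ℝ) (hB : 0 ≤ B)
    (P : Matrix (Fin d) (Fin d) ℝ) (hP : P.PosDef)
    (hgrad : frobNorm (P - P⁻¹) ≤ B) :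
    ∀ i : Fin d, -B / 2 + Real.sqrt (4 + B ^ 2) / 2 ≤ hP.1.eigenvalues i := by
  intro i
  set lam := hP.1.eigenvalues with hlam
  have hpos : 0 < lam i := hP.eigenvalues_pos i
  set T := Matrix.trace ((P - P⁻¹)ᵀ * (P - P⁻¹)) with hT
  have hTsum : T = ∑ j, (lam j - (lam j)⁻¹) ^ 2 := trace_key d P hP
  have hT0 : 0 ≤ T := hTsum ▸ Finset.sum_nonneg fun j _ => sq_nonneg _
  have hTB : T ≤ B ^ 2 := by
    have h1 : Real.sqrt T ≤ B := hgrad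
    calc T = Real.sqrt T ^ 2 := (Real.sq_sqrt hT0).symm
      _ ≤ B ^ 2 := pow_le_pow_left₀ (Real.sqrt_nonneg T) h1 2
  have hterm : (lam i - (lam i)⁻¹) ^ 2 ≤ B ^ 2 := by
    have := Finset.single_le_sum (f := fun j => (lam j - (lam j)⁻¹) ^ 2)
      (fun j _ => sq_nonneg _) (Finset.mem_univ i)
    linarith [hTsum ▸ this]
  have hnegB : -B ≤ lam i - (lam i)⁻¹ := by nlinarith [sq_nonneg (lam i - (lam i)⁻¹ + B)]
  have hquad : 0 ≤ lam i ^ 2 + B * lam i - 1 := by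
    have h := mul_le_mul_of_nonneg_left hnegB hpos.le
    have hinv : lam i * (lam i)⁻¹ = 1 := mul_inv_cancel₀ hpos.ne'
    nlinarith
  have hs : Real.sqrt (4 + B ^ 2) ≤ 2 * lam i + B := by
    have h1 : (4 + B ^ 2) ≤ (2 * lam i + B) ^ 2 := by nlinarith
    calc Real.sqrt (4 + B ^ 2) ≤ Real.sqrt ((2 * lam i + B) ^ 2) := Real.sqrt_le_sqrt h1
      _ = 2 * lam i + B := Real.sqrt_sq (by linarith)
  linarith
end

section
/- Let B ≥ 0, let c > 0 satisfy c⁴ + Bc³ − 1 = 0, and let P ∈ ℝ^{d×d} be symmetric positive definite with ‖P − P⁻³‖ ≤ B (Frobenius norm, P⁻³ = (P⁻¹)³). Then the smallest eigenvalue of P satisfies λ_min(P) ≥ c. -/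
/-!
An eigenvector `v` of `P` with eigenvalue `t > 0` is an eigenvector of `P - P⁻³` with eigenvalue
`t - t⁻³`, and the Frobenius norm of a matrix dominates the modulus of each of its eigenvalues
(apply `‖X * V‖ ≤ ‖X‖ * ‖V‖` to the one-column matrix `V` of `v`). Hence `t⁻³ - t ≤ B`, that is
`t⁴ + B t³ ≥ 1 = c⁴ + B c³`, and `t ↦ t⁴ + B t³` is increasing on `[0, ∞)` because `B`,
bounding a norm, is nonnegative.
-/

open Matrix

namespace Matrix

variable {n : Type*} [Fintype n]

theorem pow_mulVec_eq_pow_smul {R : Type*} [CommSemiring R] [DecidableEq n]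
    {A : Matrix n n R} {v : n → R} {a : R} (h : A *ᵥ v = a • v) (k : ℕ) :
    (A ^ k) *ᵥ v = a ^ k • v := by
  induction k with
  | zero => simp
  | succ k ih => rw [pow_succ, ← mulVec_mulVec, h, mulVec_smul, ih, smul_smul, pow_succ']

theorem inv_mulVec_eq_inv_smul {K : Type*} [Field K] [DecidableEq n]
    {A : Matrix n n K} {v : n → K} {a : K} (hA : IsUnit A.det) (h : A *ᵥ v = a • v) :
    A⁻¹ *ᵥ v = a⁻¹ • v := by
  have hv : v = a • (A⁻¹ *ᵥ v) := by
    rw [← mulVec_smul, ← h, mulVec_mulVec, nonsing_inv_mul _ hA, one_mulVec]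
  rcases eq_or_ne a 0 with rfl | ha
  · rw [zero_smul] at hv
    simp [hv]
  · conv_rhs => rw [hv]
    rw [smul_smul, inv_mul_cancel₀ ha, one_smul]

open scoped Matrix.Norms.Frobenius in
theorem norm_le_frobenius_norm_of_mulVec_eq_smul {𝕜 : Type*} [RCLike 𝕜]
    {A : Matrix n n 𝕜} {v : n → 𝕜} {a : 𝕜} (hv : v ≠ 0) (h : A *ᵥ v = a • v) :
    ‖a‖ ≤ ‖A‖ := by
  set V := replicateCol Unit v
  have hV : 0 < ‖V‖ := norm_pos_iff.2 ((replicateCol_eq_zero v).not.2 hv)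
  have hAV : A * V = a • V := by rw [← replicateCol_mulVec, h, replicateCol_smul]
  have := frobenius_norm_mul A V
  rw [hAV, norm_smul] at this
  exact le_of_mul_le_mul_right this hV

end Matrix

open scoped Matrix.Norms.Frobenius in
theorem frobNorm_eq_frobenius_norm {d : ℕ} (X : Matrix (Fin d) (Fin d) ℝ) :
    frobNorm X = ‖X‖ := by
  rw [frobNorm, frobenius_norm_def, ← Real.sqrt_eq_rpow, trace, Finset.sum_comm]
  simp [mul_apply, sq]

theorem one_le_pow_four_add_mul_pow_three {t B : ℝ} (ht : 0 < t) (h : t⁻¹ ^ 3 - t ≤ B) :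
    1 ≤ t ^ 4 + B * t ^ 3 := by
  have := mul_le_mul_of_nonneg_right h (pow_pos ht 3).le
  rwa [sub_mul, ← mul_pow, inv_mul_cancel₀ ht.ne', one_pow, sub_le_iff_le_add, ← pow_succ',
    add_comm] at this

theorem le_of_one_le_pow_four_add_mul_pow_three {t B c : ℝ} (ht : 0 ≤ t) (hB : 0 ≤ B)
    (hroot : c ^ 4 + B * c ^ 3 - 1 = 0) (h : 1 ≤ t ^ 4 + B * t ^ 3) : c ≤ t := by
  by_contra! htc
  have h3 : t ^ 3 < c ^ 3 := pow_lt_pow_left₀ htc ht three_ne_zero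
  have h4 : t ^ 4 < c ^ 4 := pow_lt_pow_left₀ htc ht four_ne_zero
  nlinarith [mul_le_mul_of_nonneg_left h3.le hB]

theorem eigenvalue_lower_bound_symmetric_dirichlet_general (d : ℕ) (B c : ℝ)
    (hroot : c ^ 4 + B * c ^ 3 - 1 = 0)
    (P : Matrix (Fin d) (Fin d) ℝ) (hP : P.PosDef)
    (hgrad : frobNorm (P - (P⁻¹) ^ 3) ≤ B) :
    ∀ i : Fin d, c ≤ hP.1.eigenvalues i := by
  intro i
  set t := hP.1.eigenvalues i
  set v := ⇑(hP.1.eigenvectorBasis i)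
  have hv : v ≠ 0 := by simpa [v] using hP.1.eigenvectorBasis.orthonormal.ne_zero i
  have hPv : P *ᵥ v = t • v := hP.1.mulVec_eigenvectorBasis i
  have hXv : (P - P⁻¹ ^ 3) *ᵥ v = (t - t⁻¹ ^ 3) • v := by
    rw [sub_mulVec, hPv, sub_smul,
      pow_mulVec_eq_pow_smul (inv_mulVec_eq_inv_smul hP.det_pos.ne'.isUnit hPv)]
  have habs : |t - t⁻¹ ^ 3| ≤ B := by
    have := norm_le_frobenius_norm_of_mulVec_eq_smul hv hXv
    rw [← frobNorm_eq_frobenius_norm, Real.norm_eq_abs] at this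
    exact this.trans hgrad
  have ht : 0 < t := hP.eigenvalues_pos i
  have hinv : t⁻¹ ^ 3 - t ≤ B := by linarith [neg_le_of_abs_le habs]
  exact le_of_one_le_pow_four_add_mul_pow_three ht.le ((abs_nonneg _).trans habs) hroot
    (one_le_pow_four_add_mul_pow_three ht hinv)

/-- if `c > 0` satisfies `c⁴ + Bc³ − 1 = 0` and `P` is symmetric
positive definite with `‖P − P⁻³‖ ≤ B` (Frobenius norm, `P⁻³ = (P⁻¹)³`), then every
eigenvalue of `P` (in particular the smallest one) is at least `c`. -/
theorem eigenvalue_lower_bound_symmetric_dirichlet (d : ℕ) (B c : ℝ) (hB : 0 ≤ B)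
    (hc : 0 < c) (hroot : c ^ 4 + B * c ^ 3 - 1 = 0)
    (P : Matrix (Fin d) (Fin d) ℝ) (hP : P.PosDef)
    (hgrad : frobNorm (P - (P⁻¹) ^ 3) ≤ B) :
    ∀ i : Fin d, c ≤ hP.1.eigenvalues i :=
  eigenvalue_lower_bound_symmetric_dirichlet_general d B c hroot P hP hgrad
end

section
/- (Lemma 5.1, symmetric gradient case.) Let B ≥ 0 and let P, Q ∈ ℝ^{d×d} be symmetric positive definite matrices with ‖P − P⁻¹‖ ≤ B and ‖Q − Q⁻¹‖ ≤ B (Frobenius norm). Then ‖(P − P⁻¹) − (Q − Q⁻¹)‖ ≤ (1 + √d/(C^L)²) ‖P − Q‖, where C^L := −B/2 + √(4 + B²)/2. In other words, the gradient ∇f_G(X) = X − X⁻¹ of the symmetric gradient energy is locally Lipschitz on symmetric positive definite matrices with explicit constant F = 1 + √d/(C^L)². -/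
/-!
Since `P⁻¹ - Q⁻¹ = P⁻¹ (Q - P) Q⁻¹`, the difference of gradients is
`(P - Q) + P⁻¹ (P - Q) Q⁻¹`, and it suffices to bound the spectra of `P⁻¹` and `Q⁻¹`.
If `λ` is an eigenvalue of `P`, then `λ - λ⁻¹` is an eigenvalue of `P - P⁻¹`, so
`|λ - λ⁻¹| ≤ ‖P - P⁻¹‖ ≤ B`; the inequality `λ - λ⁻¹ ≥ -B` means `λ² + Bλ - 1 ≥ 0`, i.e.
`λ ≥ C^L`. Hence `P⁻² ≤ (C^L)⁻² I` in the Loewner order, and likewise for `Q`, which gives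
`‖P⁻¹ (P - Q) Q⁻¹‖ ≤ (C^L)⁻² ‖P - Q‖ ≤ √d (C^L)⁻² ‖P - Q‖`.
-/

open Matrix

open scoped MatrixOrder

section Frobenius

attribute [local instance] Matrix.frobeniusNormedAddCommGroup Matrix.frobeniusNormedSpace

variable {d : ℕ}

theorem frobNorm_eq_norm (X : Matrix (Fin d) (Fin d) ℝ) : frobNorm X = ‖X‖ := by
  rw [frobenius_norm_def, frobNorm, Real.sqrt_eq_rpow]
  congr 1
  simp only [trace, diag, mul_apply, transpose_apply, Real.norm_eq_abs, Real.rpow_two, sq_abs]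
  rw [Finset.sum_comm]
  simp [sq]

theorem frobNorm_add_le (X Y : Matrix (Fin d) (Fin d) ℝ) :
    frobNorm (X + Y) ≤ frobNorm X + frobNorm Y := by
  simpa only [frobNorm_eq_norm] using norm_add_le X Y

theorem abs_le_frobNorm_of_mulVec_eq_smul {M : Matrix (Fin d) (Fin d) ℝ} {v : Fin d → ℝ}
    {μ : ℝ} (hv : v ≠ 0) (hMv : M *ᵥ v = μ • v) : |μ| ≤ frobNorm M := by
  set V := replicateCol Unit v
  have hV : 0 < ‖V‖ := norm_pos_iff.mpr fun h => hv (funext fun i => congrFun₂ h i ())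
  have hMV : M * V = μ • V := by rw [← replicateCol_mulVec, hMv, replicateCol_smul]
  have h := frobenius_norm_mul M V
  rw [hMV, norm_smul, Real.norm_eq_abs] at h
  rw [frobNorm_eq_norm]
  exact le_of_mul_le_mul_right h hV

end Frobenius

theorem Matrix.trace_mul_mul_transpose_le {m n : Type*} [Fintype m] [Fintype n] [DecidableEq n]
    {N : Matrix n n ℝ} {c : ℝ} (hN : N ≤ c • 1) (Y : Matrix m n ℝ) :
    trace (Y * N * Yᵀ) ≤ c * trace (Y * Yᵀ) := by
  have h := (le_iff.mp hN).mul_mul_conjTranspose_same Y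
  rw [conjTranspose_eq_transpose_of_trivial, Matrix.mul_sub, Matrix.sub_mul, Matrix.mul_smul,
    Matrix.mul_one, Matrix.smul_mul] at h
  have h' := h.trace_nonneg
  rw [trace_sub, trace_smul, smul_eq_mul] at h'
  linarith

section Sandwich

variable {d : ℕ}

theorem frobNorm_nonneg (X : Matrix (Fin d) (Fin d) ℝ) : 0 ≤ frobNorm X :=
  Real.sqrt_nonneg _

theorem frobNorm_sq (X : Matrix (Fin d) (Fin d) ℝ) : frobNorm X ^ 2 = trace (Xᵀ * X) :=
  Real.sq_sqrt <| by simpa using (posSemidef_conjTranspose_mul_self X).trace_nonneg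

theorem frobNorm_mul_mul_le {S T : Matrix (Fin d) (Fin d) ℝ} {s t : ℝ} (hs : 0 ≤ s) (ht : 0 ≤ t)
    (hS : Sᵀ * S ≤ s ^ 2 • 1) (hT : T * Tᵀ ≤ t ^ 2 • 1) (A : Matrix (Fin d) (Fin d) ℝ) :
    frobNorm (S * A * T) ≤ s * t * frobNorm A := by
  have hconj : (Tᵀ * Aᵀ) * (Sᵀ * S) * (Tᵀ * Aᵀ)ᵀ = (S * A * T)ᵀ * (S * A * T) := by
    simp only [transpose_mul, transpose_transpose, Matrix.mul_assoc]
  have hsq : frobNorm (S * A * T) ^ 2 ≤ (s * t * frobNorm A) ^ 2 := calc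
    frobNorm (S * A * T) ^ 2 = trace ((Tᵀ * Aᵀ) * (Sᵀ * S) * (Tᵀ * Aᵀ)ᵀ) := by
      rw [hconj, frobNorm_sq]
    _ ≤ s ^ 2 * trace ((Tᵀ * Aᵀ) * (Tᵀ * Aᵀ)ᵀ) := trace_mul_mul_transpose_le hS _
    _ = s ^ 2 * trace (A * (T * Tᵀ) * Aᵀ) := by
      simp only [transpose_mul, transpose_transpose]
      rw [trace_mul_comm (A * (T * Tᵀ)), Matrix.mul_assoc, trace_mul_comm Tᵀ]
      simp only [Matrix.mul_assoc]
    _ ≤ s ^ 2 * (t ^ 2 * trace (A * Aᵀ)) := by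
      gcongr
      exact trace_mul_mul_transpose_le hT A
    _ = (s * t * frobNorm A) ^ 2 := by
      rw [mul_pow, mul_pow, frobNorm_sq, trace_mul_comm]
      ring
  exact le_of_sq_le_sq hsq (by have := frobNorm_nonneg A; positivity)

end Sandwich

/-- The constant `C^L`, the positive root of `x² + B x - 1`. -/
noncomputable def positiveRoot (B : ℝ) : ℝ := -B / 2 + √(4 + B ^ 2) / 2

theorem abs_lt_sqrt_four_add_sq (B : ℝ) : |B| < √(4 + B ^ 2) := by
  rw [Real.lt_sqrt (abs_nonneg B), sq_abs]
  linarith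

theorem positiveRoot_pos (B : ℝ) : 0 < positiveRoot B := by
  have := abs_lt_sqrt_four_add_sq B
  unfold positiveRoot
  linarith [le_abs_self B]

theorem positiveRoot_le {B x : ℝ} (hx : 0 < x) (h : -B ≤ x - x⁻¹) : positiveRoot B ≤ x := by
  have hB := abs_lt_sqrt_four_add_sq B
  have hx2 : 0 ≤ x ^ 2 + B * x - 1 := by
    have := mul_le_mul_of_nonneg_left h hx.le
    rw [mul_sub, mul_inv_cancel₀ hx.ne'] at this
    nlinarith
  have hroot : positiveRoot B ^ 2 + B * positiveRoot B - 1 = 0 := by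
    unfold positiveRoot
    nlinarith [Real.sq_sqrt (show (0 : ℝ) ≤ 4 + B ^ 2 by positivity)]
  -- `x² + B x - 1 = (x - C) (x + C + B)` with `C + B > 0`.
  have hfac : 0 < x + positiveRoot B + B := by
    unfold positiveRoot
    linarith [neg_abs_le B]
  nlinarith

theorem Matrix.IsHermitian.inv_mul_inv_le {n : Type*} [Fintype n] [DecidableEq n]
    {A : Matrix n n ℝ} (hA : A.IsHermitian) {c : ℝ} (hc : 0 < c)
    (h : ∀ i, c ≤ hA.eigenvalues i) : A⁻¹ * A⁻¹ ≤ c⁻¹ ^ 2 • 1 := by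
  have hspec : ∀ x ∈ spectrum ℝ A, c ≤ x := by
    rw [hA.spectrum_real_eq_range_eigenvalues]
    rintro _ ⟨i, rfl⟩
    exact h i
  have hne : ∀ x ∈ spectrum ℝ A, x ≠ 0 := fun x hx => (hc.trans_le (hspec x hx)).ne'
  have hcont : ContinuousOn (fun x : ℝ => x⁻¹ ^ 2) (spectrum ℝ A) :=
    (continuousOn_inv₀.mono hne).pow 2
  have hcfc : (A * A)⁻¹ = cfc (fun x : ℝ => x⁻¹ ^ 2) A := by
    apply inv_eq_left_inv
    rw [← sq, ← cfc_pow_id (R := ℝ) A 2 hA.isSelfAdjoint, ← cfc_mul _ _ A hcont,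
      ← cfc_one ℝ A hA.isSelfAdjoint]
    exact cfc_congr fun x hx => by simp [hne x hx]
  rw [← Matrix.mul_inv_rev, hcfc, ← Algebra.algebraMap_eq_smul_one]
  refine cfc_le_algebraMap _ _ A (fun x hx => ?_) hcont
  exact pow_le_pow_left₀ (inv_nonneg.2 (hc.le.trans (hspec x hx))) (inv_anti₀ hc (hspec x hx)) 2

section PosDef

variable {d : ℕ} {P : Matrix (Fin d) (Fin d) ℝ}

theorem Matrix.PosDef.abs_eigenvalues_sub_inv_le (hP : P.PosDef) (i : Fin d) :
    |hP.1.eigenvalues i - (hP.1.eigenvalues i)⁻¹| ≤ frobNorm (P - P⁻¹) := by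
  set v : Fin d → ℝ := ⇑(hP.1.eigenvectorBasis i)
  set μ := hP.1.eigenvalues i
  have hv : v ≠ 0 := fun h0 =>
    hP.1.eigenvectorBasis.orthonormal.ne_zero i (by simpa [v] using congrArg (WithLp.toLp 2) h0)
  have hPv : P *ᵥ v = μ • v := hP.1.mulVec_eigenvectorBasis i
  have hPinv : P⁻¹ *ᵥ v = μ⁻¹ • v := calc
    P⁻¹ *ᵥ v = μ⁻¹ • (P⁻¹ *ᵥ (μ • v)) := by
      rw [mulVec_smul, inv_smul_smul₀ (hP.eigenvalues_pos i).ne']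
    _ = μ⁻¹ • v := by
      rw [← hPv, mulVec_mulVec, nonsing_inv_mul _ hP.det_pos.ne'.isUnit, one_mulVec]
  refine abs_le_frobNorm_of_mulVec_eq_smul hv ?_
  rw [sub_mulVec, hPv, hPinv, sub_smul]

theorem Matrix.PosDef.positiveRoot_le_eigenvalues (hP : P.PosDef) {B : ℝ}
    (h : frobNorm (P - P⁻¹) ≤ B) (i : Fin d) : positiveRoot B ≤ hP.1.eigenvalues i :=
  positiveRoot_le (hP.eigenvalues_pos i)
    (neg_le_of_abs_le ((hP.abs_eigenvalues_sub_inv_le i).trans h))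

theorem Matrix.PosDef.inv_mul_inv_le (hP : P.PosDef) {B : ℝ} (h : frobNorm (P - P⁻¹) ≤ B) :
    P⁻¹ * P⁻¹ ≤ (positiveRoot B)⁻¹ ^ 2 • 1 :=
  hP.1.inv_mul_inv_le (positiveRoot_pos B) (hP.positiveRoot_le_eigenvalues h)

theorem Matrix.PosDef.inv_transpose (hP : P.PosDef) : P⁻¹ᵀ = P⁻¹ := by
  rw [← conjTranspose_eq_transpose_of_trivial]
  exact hP.inv.1

end PosDef

theorem gradient_local_lipschitz_symmetric_gradient_general (d : ℕ) (B : ℝ)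
    (P Q : Matrix (Fin d) (Fin d) ℝ) (hP : P.PosDef) (hQ : Q.PosDef)
    (hPgrad : frobNorm (P - P⁻¹) ≤ B) (hQgrad : frobNorm (Q - Q⁻¹) ≤ B) :
    frobNorm ((P - P⁻¹) - (Q - Q⁻¹)) ≤
      (1 + Real.sqrt d / (-B / 2 + Real.sqrt (4 + B ^ 2) / 2) ^ 2) * frobNorm (P - Q) := by
  change _ ≤ (1 + √d / positiveRoot B ^ 2) * _
  set c := (positiveRoot B)⁻¹
  have hc : 0 ≤ c := (inv_pos.mpr (positiveRoot_pos B)).le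
  have hsplit : (P - P⁻¹) - (Q - Q⁻¹) = (P - Q) + P⁻¹ * (P - Q) * Q⁻¹ := by
    rw [Matrix.mul_sub, nonsing_inv_mul _ hP.det_pos.ne'.isUnit, Matrix.sub_mul, Matrix.one_mul,
      Matrix.mul_assoc, mul_nonsing_inv _ hQ.det_pos.ne'.isUnit, Matrix.mul_one]
    abel
  have hsandwich : frobNorm (P⁻¹ * (P - Q) * Q⁻¹) ≤ c * c * frobNorm (P - Q) :=
    frobNorm_mul_mul_le hc hc
      (by rw [hP.inv_transpose]; exact hP.inv_mul_inv_le hPgrad)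
      (by rw [hQ.inv_transpose]; exact hQ.inv_mul_inv_le hQgrad) _
  have hconst : c * c * frobNorm (P - Q) ≤ √d / positiveRoot B ^ 2 * frobNorm (P - Q) := by
    rcases Nat.eq_zero_or_pos d with rfl | hd
    · simp [Subsingleton.elim (P - Q) 0, frobNorm]
    · have : 1 ≤ √(d : ℝ) := Real.one_le_sqrt.mpr (by exact_mod_cast hd)
      rw [div_eq_mul_inv, ← inv_pow, sq]
      exact mul_le_mul_of_nonneg_right (le_mul_of_one_le_left (mul_self_nonneg c) this)
        (frobNorm_nonneg _)
  calc frobNorm ((P - P⁻¹) - (Q - Q⁻¹))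
      ≤ frobNorm (P - Q) + frobNorm (P⁻¹ * (P - Q) * Q⁻¹) := hsplit ▸ frobNorm_add_le _ _
    _ ≤ (1 + √d / positiveRoot B ^ 2) * frobNorm (P - Q) := by linarith

/-- Lemma 5.1, symmetric gradient case: if `P`, `Q` are symmetric
positive definite with `‖P − P⁻¹‖ ≤ B` and `‖Q − Q⁻¹‖ ≤ B` (Frobenius norm), then
the gradient `∇f_G(X) = X − X⁻¹` of the symmetric gradient energy satisfies
`‖(P − P⁻¹) − (Q − Q⁻¹)‖ ≤ (1 + √d/(C^L)²) ‖P − Q‖`, where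
`C^L = −B/2 + √(4 + B²)/2` is the positive root of `x² + Bx − 1 = 0`. -/
theorem gradient_local_lipschitz_symmetric_gradient (d : ℕ) (B : ℝ) (hB : 0 ≤ B)
    (P Q : Matrix (Fin d) (Fin d) ℝ) (hP : P.PosDef) (hQ : Q.PosDef)
    (hPgrad : frobNorm (P - P⁻¹) ≤ B) (hQgrad : frobNorm (Q - Q⁻¹) ≤ B) :
    frobNorm ((P - P⁻¹) - (Q - Q⁻¹)) ≤
      (1 + Real.sqrt d / (-B / 2 + Real.sqrt (4 + B ^ 2) / 2) ^ 2) * frobNorm (P - Q) :=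
  gradient_local_lipschitz_symmetric_gradient_general d B P Q hP hQ hPgrad hQgrad
end

section
/- (Closed-form P-update for the symmetric gradient energy.) Let w > 0, μ > 0, and let Q ∈ ℝ^{d×d} be symmetric. Let S be the (unique) positive definite square root of the symmetric positive definite matrix μ²Q² + 4w(w+μ)I, and set P := (1/(2(w+μ)))(μQ + S). Then P is symmetric positive definite and satisfies the matrix equation (w+μ)P² − μQP − wI = 0; moreover P is the unique symmetric positive definite solution of this equation. -/
/-!
The scalar equation `a t² − b x t − c = 0` (with `a, c > 0`) has the positive root
`t(x) = (b x + √(b²x² + 4ac)) / (2a)`, so applying `t` to the Hermitian matrix `Q` through the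
continuous functional calculus gives a positive definite solution `P` of the matrix equation.
Conversely, any positive definite solution `P` gives `b Q = a P − c P⁻¹`, so that
`(a P + c P⁻¹)² = b² Q² + 4ac = S²`; uniqueness of positive square roots forces
`a P + c P⁻¹ = S`, and adding the two identities yields `2a P = b Q + S`.
-/

open Matrix
open scoped MatrixOrder ComplexOrder

noncomputable def quadraticRoot (a b c x : ℝ) : ℝ :=
  (b * x + √((b * x) ^ 2 + 4 * c * a)) / (2 * a)

@[fun_prop]
theorem continuous_quadraticRoot (a b c : ℝ) : Continuous (quadraticRoot a b c) := by
  unfold quadraticRoot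
  fun_prop

theorem quadraticRoot_pos {a c : ℝ} (ha : 0 < a) (hc : 0 < c) (b x : ℝ) :
    0 < quadraticRoot a b c x := by
  have : |b * x| < √((b * x) ^ 2 + 4 * c * a) := by
    rw [← Real.sqrt_sq_eq_abs]
    exact Real.sqrt_lt_sqrt (sq_nonneg _) (by linarith [mul_pos hc ha])
  exact div_pos (by linarith [neg_abs_le (b * x)]) (by positivity)

theorem quadraticRoot_isRoot {a c : ℝ} (ha : 0 < a) (hc : 0 ≤ c) (b x : ℝ) :
    a * quadraticRoot a b c x ^ 2 - b * (x * quadraticRoot a b c x) - c = 0 := by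
  have hs := Real.sq_sqrt (by positivity : 0 ≤ (b * x) ^ 2 + 4 * c * a)
  unfold quadraticRoot
  linear_combination (norm := skip) (1 / (4 * a)) * hs
  field_simp
  ring

namespace Matrix

variable {𝕜 n : Type*} [RCLike 𝕜] [Fintype n] [DecidableEq n]

theorem PosSemidef.eq_of_mul_self_eq {S T : Matrix n n 𝕜} (hS : S.PosSemidef)
    (hT : T.PosSemidef) (h : S * S = T * T) : S = T := by
  rw [← CFC.sqrt_mul_self S hS.nonneg, h, CFC.sqrt_mul_self T hT.nonneg]

theorem IsHermitian.exists_posDef_quadratic_root {Q : Matrix n n 𝕜} (hQ : Q.IsHermitian)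
    {a c : ℝ} (ha : 0 < a) (hc : 0 < c) (b : ℝ) :
    ∃ P : Matrix n n 𝕜, P.PosDef ∧ a • P ^ 2 - b • (Q * P) - c • (1 : Matrix n n 𝕜) = 0 := by
  have hQ : IsSelfAdjoint Q := hQ
  set t := quadraticRoot a b c with t_def
  refine ⟨cfc t Q, ?_, ?_⟩
  · rw [← isStrictlyPositive_iff_posDef, cfc_isStrictlyPositive_iff t Q]
    exact fun x _ => quadraticRoot_pos ha hc b x
  · calc _ = cfc (fun x => a * t x ^ 2 - b * (x * t x) - c) Q := by
          rw [cfc_sub (fun x => a * t x ^ 2 - b * (x * t x)) (fun _ => c) Q,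
            cfc_sub (fun x => a * t x ^ 2) (fun x => b * (x * t x)) Q,
            cfc_const_mul a (fun x => t x ^ 2) Q, cfc_const_mul b (fun x => x * t x) Q,
            cfc_pow t 2 Q, cfc_mul (fun x => x) t Q, cfc_id' ℝ Q, cfc_const c Q,
            Algebra.algebraMap_eq_smul_one c]
      _ = 0 := by simp [t_def, quadraticRoot_isRoot ha hc.le]

theorem PosDef.eq_of_quadratic {Q S P : Matrix n n 𝕜} {a b c : ℝ} (ha : 0 < a) (hc : 0 ≤ c)
    (hS : S.PosSemidef) (hSsq : S * S = b ^ 2 • (Q * Q) + (4 * c * a) • (1 : Matrix n n 𝕜))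
    (hP : P.PosDef) (hE : a • P ^ 2 - b • (Q * P) - c • (1 : Matrix n n 𝕜) = 0) :
    P = (1 / (2 * a)) • (b • Q + S) := by
  have hdet : IsUnit P.det := (isUnit_iff_isUnit_det P).mp hP.isUnit
  have hPP : P * P⁻¹ = 1 := mul_nonsing_inv P hdet
  have hPP' : P⁻¹ * P = 1 := nonsing_inv_mul P hdet
  have hbQ : b • Q = a • P - c • P⁻¹ := by
    have := congrArg (· * P⁻¹) hE
    simp only [sub_mul, smul_mul_assoc, sq, Matrix.mul_assoc, hPP, Matrix.mul_one, Matrix.one_mul,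
      zero_mul] at this
    linear_combination (norm := module) -this
  have hsq : (a • P + c • P⁻¹) * (a • P + c • P⁻¹) = S * S := by
    rw [hSsq, show b ^ 2 • (Q * Q) = (b • Q) * (b • Q) by rw [smul_mul_smul_comm, sq], hbQ]
    simp only [add_mul, mul_add, sub_mul, mul_sub, smul_mul_smul_comm, hPP, hPP']
    module
  have hS' : a • P + c • P⁻¹ = S :=
    ((hP.smul ha).posSemidef.add (hP.inv.posSemidef.smul hc)).eq_of_mul_self_eq hS hsq
  rw [← hS', hbQ]
  match_scalars <;> field_simp <;> ring

end Matrix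

/-- closed-form P-update for the symmetric gradient energy:
for `w, μ > 0` and symmetric `Q`, if `S` is the positive definite square root of
`μ²Q² + 4w(w+μ)I`, then `P = (1/(2(w+μ)))(μQ + S)` is symmetric positive definite,
satisfies `(w+μ)P² − μQP − wI = 0`, and is the unique symmetric positive definite
solution of that equation. -/
theorem p_update_symmetric_gradient (d : ℕ) (w μ : ℝ) (hw : 0 < w) (hμ : 0 < μ)
    (Q : Matrix (Fin d) (Fin d) ℝ) (hQ : Qᵀ = Q)
    (S : Matrix (Fin d) (Fin d) ℝ) (hS : S.PosDef)
    (hSsq : S * S = μ ^ 2 • (Q * Q) + (4 * w * (w + μ)) • (1 : Matrix (Fin d) (Fin d) ℝ)) :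
    ((1 / (2 * (w + μ))) • (μ • Q + S)).PosDef ∧
    (w + μ) • ((1 / (2 * (w + μ))) • (μ • Q + S)) ^ 2
      - μ • (Q * ((1 / (2 * (w + μ))) • (μ • Q + S)))
      - w • (1 : Matrix (Fin d) (Fin d) ℝ) = 0 ∧
    ∀ P' : Matrix (Fin d) (Fin d) ℝ, P'.PosDef →
      (w + μ) • P' ^ 2 - μ • (Q * P') - w • (1 : Matrix (Fin d) (Fin d) ℝ) = 0 →
      P' = (1 / (2 * (w + μ))) • (μ • Q + S) := by
  have ha : 0 < w + μ := by linarith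
  have hQh : Q.IsHermitian := by rw [IsHermitian, conjTranspose_eq_transpose_of_trivial, hQ]
  have huniq : ∀ P' : Matrix (Fin d) (Fin d) ℝ, P'.PosDef →
      (w + μ) • P' ^ 2 - μ • (Q * P') - w • (1 : Matrix (Fin d) (Fin d) ℝ) = 0 →
      P' = (1 / (2 * (w + μ))) • (μ • Q + S) :=
    fun P' hP' hE => PosDef.eq_of_quadratic ha hw.le hS.posSemidef hSsq hP' hE
  obtain ⟨P, hP, hE⟩ := hQh.exists_posDef_quadratic_root ha hw μ
  have hPeq := huniq P hP hE
  exact ⟨hPeq ▸ hP, hPeq ▸ hE, huniq⟩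
end

section
/- (P-update for the symmetric Dirichlet energy.) Let w > 0, μ > 0, and let Q ∈ ℝ^{d×d} be symmetric. Then there exists exactly one symmetric positive definite matrix P ∈ ℝ^{d×d} satisfying the quartic matrix equation (w+μ)P⁴ − μQP³ − wI = 0. -/
/-!
A positive definite solution is `P = r(Q)` in the functional calculus of `Q`, where `r(q)` is the
unique positive root of the scalar quartic `(w + μ)x⁴ − μqx³ = w`. Conversely, the equation says
`Q = g(P)` with `g(x) = ((w + μ)x⁴ − w) / (μx³)`, and scalar uniqueness gives `r(g(x)) = x` for
`x > 0`, so any solution satisfies `P = (r ∘ g)(P) = r(Q)`. The spectrum of a matrix is finite, so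
every function is continuous on it and `cfc` needs no regularity of the implicitly defined `r`.
-/

open Matrix

section QuarticRoot

variable {a c : ℝ}

theorem exists_pos_quartic_root (ha : 0 < a) (hc : 0 < c) (b : ℝ) :
    ∃ x, 0 < x ∧ a * x ^ 4 - b * x ^ 3 = c := by
  set R := max 1 ((|b| + c) / a)
  have hR1 : 1 ≤ R := le_max_left _ _
  have hR : |b| + c ≤ a * R := (div_le_iff₀' ha).mp (le_max_right _ _)
  have hgR : c ≤ a * R ^ 4 - b * R ^ 3 := by
    have hR3 : 1 ≤ R ^ 3 := one_le_pow₀ hR1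
    nlinarith [le_abs_self b]
  obtain ⟨x, hx, hgx⟩ := intermediate_value_Icc (zero_le_one.trans hR1)
    (by fun_prop : Continuous fun x : ℝ => a * x ^ 4 - b * x ^ 3).continuousOn
    ⟨by simpa using hc.le, hgR⟩
  refine ⟨x, hx.1.lt_of_ne ?_, hgx⟩
  rintro rfl
  simp [hc.ne] at hgx

theorem pos_quartic_root_unique (ha : 0 ≤ a) (hc : 0 < c) {b x y : ℝ} (hx : 0 < x) (hy : 0 < y)
    (hxb : a * x ^ 4 - b * x ^ 3 = c) (hyb : a * y ^ 4 - b * y ^ 3 = c) : x = y := by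
  have key : (x - y) * (a * x ^ 3 * y ^ 3 + c * (x ^ 2 + x * y + y ^ 2)) = 0 := by
    linear_combination y ^ 3 * hxb - x ^ 3 * hyb
  have hpos : 0 < a * x ^ 3 * y ^ 3 + c * (x ^ 2 + x * y + y ^ 2) := by positivity
  exact sub_eq_zero.mp ((mul_eq_zero.mp key).resolve_right hpos.ne')

end QuarticRoot

namespace Matrix

variable {n : Type*} [Fintype n] [DecidableEq n]

theorem continuousOn_spectrum (A : Matrix n n ℝ) (f : ℝ → ℝ) : ContinuousOn f (spectrum ℝ A) :=
  A.finite_real_spectrum.continuousOn f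

open scoped MatrixOrder in
theorem IsHermitian.posDef_cfc {A : Matrix n n ℝ} (hA : A.IsHermitian) {f : ℝ → ℝ}
    (hf : ∀ x ∈ spectrum ℝ A, 0 < f x) : (cfc f A).PosDef :=
  ((cfc_isStrictlyPositive_iff f A (A.continuousOn_spectrum f) hA).mpr hf).posDef

open scoped MatrixOrder in
theorem PosDef.pos_of_mem_spectrum {A : Matrix n n ℝ} (hA : A.PosDef) {x : ℝ}
    (hx : x ∈ spectrum ℝ A) : 0 < x :=
  hA.isStrictlyPositive.spectrum_pos hx

theorem IsHermitian.eq_cfc_div_pow {P Q : Matrix n n ℝ} (hP : P.IsHermitian) (hPu : IsUnit P)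
    {g : ℝ → ℝ} (k : ℕ) (h : Q * P ^ k = cfc g P) : Q = cfc (fun x => g x / x ^ k) P := by
  have hc := P.continuousOn_spectrum
  have hPk : cfc (fun x => g x / x ^ k) P * P ^ k = cfc g P := by
    rw [← cfc_pow_id (R := ℝ) P k hP.isSelfAdjoint, ← cfc_mul _ _ P (hc _) (hc _)]
    refine cfc_congr fun x hx => div_mul_cancel₀ _ (pow_ne_zero k ?_)
    exact fun hx0 => spectrum.zero_notMem ℝ hPu (hx0 ▸ hx)
  exact (hPu.pow k).mul_left_injective (h.trans hPk.symm)

theorem IsHermitian.cfc_quartic_residual {Q : Matrix n n ℝ} (hQ : Q.IsHermitian) (w μ : ℝ)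
    (f : ℝ → ℝ) :
    (w + μ) • cfc f Q ^ 4 - μ • (Q * cfc f Q ^ 3) - w • (1 : Matrix n n ℝ) =
      cfc (fun x => (w + μ) * f x ^ 4 - μ * x * f x ^ 3 - w) Q := by
  have hc := Q.continuousOn_spectrum
  rw [cfc_sub _ _ _ (hc _) (hc _), cfc_sub _ _ _ (hc _) (hc _), cfc_const w Q hQ.isSelfAdjoint,
    cfc_const_mul _ _ _ (hc _), cfc_pow _ _ _ (hc _)]
  simp only [mul_assoc]
  rw [cfc_const_mul _ _ _ (hc _), cfc_mul _ _ _ (hc _) (hc _), cfc_pow _ _ _ (hc _),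
    cfc_id' ℝ Q hQ.isSelfAdjoint, Algebra.algebraMap_eq_smul_one]

theorem PosDef.eq_cfc_of_quartic_residual_eq_zero {P Q : Matrix n n ℝ} (hP : P.PosDef) {w μ : ℝ}
    (hμ : μ ≠ 0) (h : (w + μ) • P ^ 4 - μ • (Q * P ^ 3) - w • (1 : Matrix n n ℝ) = 0) :
    Q = cfc (fun x => μ⁻¹ * ((w + μ) * x ^ 4 - w) / x ^ 3) P := by
  have hc := P.continuousOn_spectrum
  have hPs := hP.isHermitian.isSelfAdjoint
  refine hP.isHermitian.eq_cfc_div_pow hP.isUnit 3 ?_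
  rw [cfc_const_mul _ _ _ (hc _), cfc_sub _ _ _ (hc _) (hc _), cfc_const_mul _ _ _ (hc _),
    cfc_pow_id (R := ℝ) P 4 hPs, cfc_const w P hPs, Algebra.algebraMap_eq_smul_one,
    eq_inv_smul_iff₀ hμ, eq_comm, ← sub_eq_zero, ← h]
  abel

end Matrix

/-- P-update for the symmetric Dirichlet energy: for `w, μ > 0` and
symmetric `Q`, there is exactly one symmetric positive definite matrix `P`
satisfying `(w+μ)P⁴ − μQP³ − wI = 0`. -/
theorem p_update_symmetric_dirichlet (d : ℕ) (w μ : ℝ) (hw : 0 < w) (hμ : 0 < μ)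
    (Q : Matrix (Fin d) (Fin d) ℝ) (hQ : Qᵀ = Q) :
    ∃! P : Matrix (Fin d) (Fin d) ℝ, P.PosDef ∧
      (w + μ) • P ^ 4 - μ • (Q * P ^ 3) - w • (1 : Matrix (Fin d) (Fin d) ℝ) = 0 := by
  have hQh : Q.IsHermitian := isHermitian_iff_isSymm.mpr hQ
  have hwμ : 0 < w + μ := add_pos hw hμ
  choose r hr_pos hr_root using fun q : ℝ => exists_pos_quartic_root hwμ hw (μ * q)
  refine ⟨cfc r Q, ⟨hQh.posDef_cfc fun q _ => hr_pos q, ?_⟩, ?_⟩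
  · rw [hQh.cfc_quartic_residual, ← cfc_zero ℝ Q]
    exact cfc_congr fun q _ => by simpa [sub_eq_zero] using hr_root q
  · rintro P ⟨hP, hPQ⟩
    have hQP := hP.eq_cfc_of_quartic_residual_eq_zero hμ.ne' hPQ
    calc P = cfc id P := (cfc_id ℝ P hP.isHermitian.isSelfAdjoint).symm
      _ = cfc (r ∘ fun x => μ⁻¹ * ((w + μ) * x ^ 4 - w) / x ^ 3) P := by
        refine cfc_congr fun x hx => ?_
        have hx0 := hP.pos_of_mem_spectrum hx
        refine pos_quartic_root_unique (x := x) hwμ.le hw hx0 (hr_pos _) ?_ (hr_root _)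
        field_simp
        ring
      _ = cfc r Q := by
        rw [hQP, cfc_comp _ _ P hP.isHermitian.isSelfAdjoint
          ((P.finite_real_spectrum.image _).continuousOn r) (continuousOn_spectrum _ _)]
end
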